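/- Spiral states from eigenvectors with unimodular components: In the spin-lattice setup, let λ : {1,…,L} → ℝ, q ∈ Q, j ∈ ℝ, and let z ∈ ℂ^L satisfy Σ_j Ĵ^{ij}(λ,q) z_j = j·z_i for all i and |z_i| = 1 for all i. Define s^{(1)}_{i,n} := Re(z_i e^{i n·q}) and s^{(2)}_{i,n} := Im(z_i e^{i n·q}). Then (a) for every site (i,n) the two-dimensional vector (s^{(1)}_{i,n}, s^{(2)}_{i,n}) is a unit vector, i.e. (s^{(1)}_{i,n})² + (s^{(2)}_{i,n})² = 1; and (b) s^{(1)} and s^{(2)} are real eigenvectors of the real dressed matrix J(λ) with eigenvalue j: Σ_{j,m} J(λ)^{ij}_{n,m} s^{(k)}_{j,m} = j·s^{(k)}_{i,n} for k = 1,2 and all (i,n). -/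

import Mathlib

/-- The phase factor `e^{i n·q}` associated with a cell index `n` of the lattice
`ℤ_{N 1} × … × ℤ_{N d}` and a wave vector `q ∈ ℝ^d`, using the canonical
representatives `(n i).val`. -/
noncomputable def latticePhase {d : ℕ} (N : Fin d → ℕ) (q : Fin d → ℝ)
    (n : (i : Fin d) → ZMod (N i)) : ℂ :=
  Complex.exp (Complex.I * Complex.ofReal (∑ i, ((n i).val : ℝ) * q i))

/-- Membership in the (finite) Brillouin set `Q`. -/
def inBrillouin {d : ℕ} (N : Fin d → ℕ) (q : Fin d → ℝ) : Prop :=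
  ∀ t, ∃ k : ℤ, q t = 2 * Real.pi * k / N t

/-- The dressed coupling matrix `J(λ)^{ij}_{n m} = J^{ij}_{n m} + λ i δ_{ij} δ_{n m}`. -/
noncomputable def dressedJ {L d : ℕ} {N : Fin d → ℕ}
    (J : Fin L → Fin L → ((i : Fin d) → ZMod (N i)) → ((i : Fin d) → ZMod (N i)) → ℝ)
    (lam : Fin L → ℝ)
    (i j : Fin L) (n m : (i : Fin d) → ZMod (N i)) : ℝ :=
  J i j n m + if i = j ∧ n = m then lam i else 0

/-- The Fourier-transformed dressed coupling matrix
`Ĵ^{ij}(λ,q) = ∑_ℓ J(λ)^{ij}_{0 ℓ} e^{i ℓ·q}`. -/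
noncomputable def fourierJ {L d : ℕ} (N : Fin d → ℕ) [∀ i, NeZero (N i)]
    (J : Fin L → Fin L → ((i : Fin d) → ZMod (N i)) → ((i : Fin d) → ZMod (N i)) → ℝ)
    (lam : Fin L → ℝ) (q : Fin d → ℝ) (i j : Fin L) : ℂ :=
  ∑ ℓ : (i : Fin d) → ZMod (N i),
    (dressedJ J lam i j 0 ℓ : ℂ) * latticePhase N q ℓ

lemma latticePhase_add {d : ℕ} (N : Fin d → ℕ) [∀ i, NeZero (N i)]
    (q : Fin d → ℝ) (hq : inBrillouin N q) (a b : (i : Fin d) → ZMod (N i)) :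
    latticePhase N q (a + b) = latticePhase N q a * latticePhase N q b := by
  have h : ∀ i : Fin d, ∃ m : ℤ,
      (((a + b) i).val : ℝ) * q i
        = ((a i).val : ℝ) * q i + ((b i).val : ℝ) * q i + 2 * Real.pi * m := by
    intro i
    obtain ⟨k, hk⟩ := hq i
    have hN : (N i : ℝ) ≠ 0 := Nat.cast_ne_zero.mpr (NeZero.ne _)
    have hNq : (N i : ℝ) * q i = 2 * Real.pi * k := by
      rw [hk]; field_simp
    set t : ℕ := ((a i).val + (b i).val) / N i with ht
    have hval : ((a + b) i).val = ((a i).val + (b i).val) % N i :=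
      ZMod.val_add (a i) (b i)
    refine ⟨-(k * t), ?_⟩
    have hsplit : ((a i).val + (b i).val) % N i + N i * t = (a i).val + (b i).val :=
      Nat.mod_add_div _ _
    have hcast : (((a + b) i).val : ℝ)
        = ((a i).val : ℝ) + ((b i).val : ℝ) - (N i : ℝ) * (t : ℝ) := by
      rw [hval]
      have := congrArg (fun x : ℕ => (x : ℝ)) hsplit
      push_cast at this ⊢
      linarith
    have h2 : (N i : ℝ) * (t : ℝ) * q i = 2 * Real.pi * ((k : ℝ) * (t : ℝ)) := by
      rw [mul_right_comm, hNq]; ring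
    rw [hcast, sub_mul, add_mul]
    push_cast
    linarith
  choose m hm using h
  unfold latticePhase
  rw [← Complex.exp_add]
  have hsum : (∑ i, (((a + b) i).val : ℝ) * q i)
      = (∑ i, ((a i).val : ℝ) * q i) + (∑ i, ((b i).val : ℝ) * q i)
        + 2 * Real.pi * (∑ i, (m i : ℝ)) := by
    rw [Finset.mul_sum, ← Finset.sum_add_distrib, ← Finset.sum_add_distrib]
    exact Finset.sum_congr rfl fun i _ => hm i
  rw [hsum]
  have key : (Complex.I * Complex.ofReal ((∑ i, ((a i).val : ℝ) * q i)
        + (∑ i, ((b i).val : ℝ) * q i) + 2 * Real.pi * (∑ i, (m i : ℝ))))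
      = (Complex.I * Complex.ofReal (∑ i, ((a i).val : ℝ) * q i)
          + Complex.I * Complex.ofReal (∑ i, ((b i).val : ℝ) * q i))
        + ((∑ i, m i : ℤ) : ℂ) * (2 * Real.pi * Complex.I) := by
    push_cast
    ring
  rw [key, Complex.exp_add, Complex.exp_int_mul_two_pi_mul_I, mul_one]

lemma latticePhase_abs {d : ℕ} (N : Fin d → ℕ) (q : Fin d → ℝ)
    (n : (i : Fin d) → ZMod (N i)) : ‖latticePhase N q n‖ = 1 := by
  unfold latticePhase
  rw [mul_comm, Complex.norm_exp_ofReal_mul_I]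

/-- Translation invariance of the dressed matrix. -/
lemma dressedJ_translate {L d : ℕ} {N : Fin d → ℕ}
    (J : Fin L → Fin L → ((i : Fin d) → ZMod (N i)) → ((i : Fin d) → ZMod (N i)) → ℝ)
    (htrans : ∀ i j n m a, J i j (n + a) (m + a) = J i j n m)
    (lam : Fin L → ℝ) (i j : Fin L) (n ℓ : (i : Fin d) → ZMod (N i)) :
    dressedJ J lam i j n (ℓ + n) = dressedJ J lam i j 0 ℓ := by
  unfold dressedJ
  have h1 : J i j n (ℓ + n) = J i j 0 ℓ := by
    have := htrans i j 0 ℓ n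
    simpa using this
  have h2 : (n = ℓ + n) ↔ ((0 : (i : Fin d) → ZMod (N i)) = ℓ) := by
    rw [right_eq_add, eq_comm]
  rw [h1]
  congr 1
  simp only [h2]

/-- Spiral states from eigenvectors with unimodular components: if `z` is an
eigenvector of `Ĵ(λ,q)` with real eigenvalue `ev` and `|z i| = 1` for all `i`,
then `s¹_{i,n} = Re(z i e^{i n·q})`, `s²_{i,n} = Im(z i e^{i n·q})` form unit
vectors at every site, and both are real eigenvectors of the dressed matrix
`J(λ)` with eigenvalue `ev`. -/
theorem spiral_ground_state {L d : ℕ} (N : Fin d → ℕ) [∀ i, NeZero (N i)]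
    (J : Fin L → Fin L → ((i : Fin d) → ZMod (N i)) → ((i : Fin d) → ZMod (N i)) → ℝ)
    (hsymm : ∀ i j n m, J i j n m = J j i m n)
    (htrans : ∀ i j n m a, J i j (n + a) (m + a) = J i j n m)
    (lam : Fin L → ℝ) (q : Fin d → ℝ) (hq : inBrillouin N q)
    (z : Fin L → ℂ) (ev : ℝ)
    (hmod : ∀ i, ‖z i‖ = 1)
    (hz : ∀ i, ∑ j, fourierJ N J lam q i j * z j = (ev : ℂ) * z i) :
    (∀ (i : Fin L) (n : (t : Fin d) → ZMod (N t)),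
        (z i * latticePhase N q n).re ^ 2 + (z i * latticePhase N q n).im ^ 2 = 1)
    ∧
    (∀ (i : Fin L) (n : (t : Fin d) → ZMod (N t)),
        (∑ j, ∑ m, dressedJ J lam i j n m * (z j * latticePhase N q m).re
          = ev * (z i * latticePhase N q n).re)
        ∧
        (∑ j, ∑ m, dressedJ J lam i j n m * (z j * latticePhase N q m).im
          = ev * (z i * latticePhase N q n).im)) := by
  -- key complex eigenvector identity
  have key : ∀ (i : Fin L) (n : (t : Fin d) → ZMod (N t)),
      ∑ j, ∑ m, (dressedJ J lam i j n m : ℂ) * (z j * latticePhase N q m)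
        = (ev : ℂ) * (z i * latticePhase N q n) := by
    intro i n
    have hinner : ∀ j : Fin L,
        ∑ m, (dressedJ J lam i j n m : ℂ) * (z j * latticePhase N q m)
          = fourierJ N J lam q i j * z j * latticePhase N q n := by
      intro j
      have := Equiv.sum_comp (Equiv.addRight n)
        (fun m => (dressedJ J lam i j n m : ℂ) * (z j * latticePhase N q m))
      rw [← this]
      simp only [Equiv.coe_addRight]
      unfold fourierJ
      rw [Finset.sum_mul, Finset.sum_mul]
      refine Finset.sum_congr rfl fun ℓ _ => ?_
      rw [dressedJ_translate J htrans, latticePhase_add N q hq ℓ n]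
      ring
    calc ∑ j, ∑ m, (dressedJ J lam i j n m : ℂ) * (z j * latticePhase N q m)
        = ∑ j, fourierJ N J lam q i j * z j * latticePhase N q n :=
          Finset.sum_congr rfl fun j _ => hinner j
      _ = (∑ j, fourierJ N J lam q i j * z j) * latticePhase N q n := by
          rw [Finset.sum_mul]
      _ = (ev : ℂ) * z i * latticePhase N q n := by rw [hz i]
      _ = (ev : ℂ) * (z i * latticePhase N q n) := by ring
  constructor
  · intro i n
    have habs : ‖z i * latticePhase N q n‖ = 1 := by
      rw [norm_mul, hmod i, latticePhase_abs, mul_one]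
    have h := Complex.sq_norm (z i * latticePhase N q n)
    rw [habs] at h
    calc (z i * latticePhase N q n).re ^ 2 + (z i * latticePhase N q n).im ^ 2
        = Complex.normSq (z i * latticePhase N q n) := by
          simp [Complex.normSq_apply, sq]
      _ = 1 := by rw [← h]; norm_num
  · intro i n
    have hre := congrArg Complex.re (key i n)
    have him := congrArg Complex.im (key i n)
    simp only [Complex.re_sum, Complex.im_sum, Complex.re_ofReal_mul,
      Complex.im_ofReal_mul] at hre him
    exact ⟨hre, him⟩
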